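/- arXiv:2112.04439 — 2 statements merged into one kernel-verified Lean document; each statement's English description precedes it below -/
import Mathlib

section
/- Consider system x_{k+1} = Ax_k + Bu_k with (A,B) controllable, and suppose data (u^d_{[0,N−1]}, x^d_{[0,N−1]}) generated by this system satisfy the fundamental lemma of order L+1 (any input-state trajectory of length L+1 is in the column span of the stacked Hankel matrices [H_{L+1}(u^d); H_{L+1}(x^d)]). Let K ∈ ℝ^{m×n} and define v^d_k = u^d_k − K x^d_k. Then any length-(L+1) sequence (v_{[k,k+L]}, x_{[k,k+L]}) is a trajectory of the pre-stabilized system x_{k+1} = (A + BK)x_k + Bv_k if and only if there exists α ∈ ℝ^{N−L} such that the stacked vector of the v- and x-sequences equals [H_{L+1}(u^d) − K̃ H_{L+1}(x^d); H_{L+1}(x^d)] α, where K̃ is the block-diagonal matrix with L+1 copies of K. -/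
open Matrix Finset

/-! Under the change of input `u = v + K x` the closed-loop recursion
`x⁺ = (A + BK) x + B v` is the open-loop recursion `x⁺ = A x + B u`, and because the
map `(u, x) ↦ (u - K x, x)` is linear, a combination `α` of the data columns
represents `(u, x)` exactly when it represents `(v, x)` in the transformed data
`v^d = u^d - K x^d`. Both sides of the claimed equivalence are therefore the two
sides of the fundamental lemma for `(u, x)`. -/

section Feedback

variable {R ι m n : Type*} [CommRing R] [Fintype n]

theorem Matrix.add_mul_mulVec_add_mulVec [Fintype m] (A : Matrix n n R) (B : Matrix n m R)
    (K : Matrix m n R) (x : n → R) (v : m → R) :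
    (A + B * K) *ᵥ x + B *ᵥ v = A *ᵥ x + B *ᵥ (v + K *ᵥ x) := by
  rw [add_mulVec, mulVec_add, ← mulVec_mulVec]
  abel

theorem Matrix.sum_smul_sub_mulVec (K : Matrix m n R) (s : Finset ι) (α : ι → R)
    (u : ι → m → R) (x : ι → n → R) :
    ∑ j ∈ s, α j • (u j - K *ᵥ x j) = ∑ j ∈ s, α j • u j - K *ᵥ ∑ j ∈ s, α j • x j := by
  simp only [mulVec_sum, mulVec_smul, smul_sub, sum_sub_distrib]

theorem Matrix.eq_sum_smul_sub_mulVec_iff (K : Matrix m n R) (s : Finset ι) (α : ι → R)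
    (u : ι → m → R) (x : ι → n → R) (v₀ : m → R) (x₀ : n → R) :
    (v₀ = ∑ j ∈ s, α j • (u j - K *ᵥ x j) ∧ x₀ = ∑ j ∈ s, α j • x j) ↔
      (v₀ + K *ᵥ x₀ = ∑ j ∈ s, α j • u j ∧ x₀ = ∑ j ∈ s, α j • x j) := by
  rw [sum_smul_sub_mulVec, ← eq_sub_iff_add_eq]
  constructor <;> rintro ⟨hv, rfl⟩ <;> exact ⟨hv, rfl⟩

end Feedback

theorem prestabilized_fundamental_lemma_general {n m N L : ℕ}
    (A : Matrix (Fin n) (Fin n) ℝ) (B : Matrix (Fin n) (Fin m) ℝ)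
    (K : Matrix (Fin m) (Fin n) ℝ)
    (ud : ℕ → Fin m → ℝ) (xd : ℕ → Fin n → ℝ)
    -- the fundamental lemma of order L+1 holds for the data (u^d, x^d):
    (hFL : ∀ (u : ℕ → Fin m → ℝ) (x : ℕ → Fin n → ℝ),
      (∀ l < L, x (l + 1) = A.mulVec (x l) + B.mulVec (u l)) ↔
      ∃ α : Fin (N - L) → ℝ, ∀ l ≤ L,
        u l = ∑ j : Fin (N - L), α j • ud (j.val + l) ∧
        x l = ∑ j : Fin (N - L), α j • xd (j.val + l))
    (vd : ℕ → Fin m → ℝ) (hvd : ∀ k, vd k = ud k - K.mulVec (xd k)) :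
    ∀ (v : ℕ → Fin m → ℝ) (x : ℕ → Fin n → ℝ),
      (∀ l < L, x (l + 1) = (A + B * K).mulVec (x l) + B.mulVec (v l)) ↔
      ∃ α : Fin (N - L) → ℝ, ∀ l ≤ L,
        v l = ∑ j : Fin (N - L), α j • vd (j.val + l) ∧
        x l = ∑ j : Fin (N - L), α j • xd (j.val + l) := by
  intro v x
  simp only [hvd, add_mul_mulVec_add_mulVec, eq_sum_smul_sub_mulVec_iff]
  exact hFL (fun l => v l + K *ᵥ x l) x

/-- Pre-stabilized fundamental lemma: with the change of input
variable `v = u − Kx`, trajectories of `x⁺ = (A+BK)x + Bv` are exactly the linear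
combinations of the columns of `[H(u^d) − K̃ H(x^d); H(x^d)]`. -/
theorem prestabilized_fundamental_lemma {n m N L : ℕ}
    (A : Matrix (Fin n) (Fin n) ℝ) (B : Matrix (Fin n) (Fin m) ℝ)
    (K : Matrix (Fin m) (Fin n) ℝ)
    (hctrb : (Matrix.of fun (i : Fin n) (jp : Fin n × Fin m) =>
        (A ^ (jp.1 : ℕ) * B) i jp.2).rank = n)
    (ud : ℕ → Fin m → ℝ) (xd : ℕ → Fin n → ℝ)
    (hdata : ∀ k, k + 1 < N → xd (k + 1) = A.mulVec (xd k) + B.mulVec (ud k))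
    -- the fundamental lemma of order L+1 holds for the data (u^d, x^d):
    (hFL : ∀ (u : ℕ → Fin m → ℝ) (x : ℕ → Fin n → ℝ),
      (∀ l < L, x (l + 1) = A.mulVec (x l) + B.mulVec (u l)) ↔
      ∃ α : Fin (N - L) → ℝ, ∀ l ≤ L,
        u l = ∑ j : Fin (N - L), α j • ud (j.val + l) ∧
        x l = ∑ j : Fin (N - L), α j • xd (j.val + l))
    (vd : ℕ → Fin m → ℝ) (hvd : ∀ k, vd k = ud k - K.mulVec (xd k)) :
    ∀ (v : ℕ → Fin m → ℝ) (x : ℕ → Fin n → ℝ),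
      (∀ l < L, x (l + 1) = (A + B * K).mulVec (x l) + B.mulVec (v l)) ↔
      ∃ α : Fin (N - L) → ℝ, ∀ l ≤ L,
        v l = ∑ j : Fin (N - L), α j • vd (j.val + l) ∧
        x l = ∑ j : Fin (N - L), α j • xd (j.val + l) :=
  prestabilized_fundamental_lemma_general A B K ud xd hFL vd hvd
end

section
/- Let f(x,w) = f_x(x) + w with f_x : X₀ → ℝⁿ Lipschitz continuous on a compact robust positive invariant set X₀ containing the origin in its interior, and let V : X₀ → ℝ≥0 be Lipschitz continuous on X₀ and an ISS-Lyapunov function for the undisturbed system x⁺ = f_x(x) (i.e., α₁(‖x‖) ≤ V(x) ≤ α₂(‖x‖) and V(f_x(x)) − V(x) ≤ −α₃(‖x‖) for class-K∞ functions α₁,α₂,α₃). Then V is an ISS-Lyapunov function for the disturbed system: there exists γ ∈ K such that V(f_x(x) + w) − V(x) ≤ −α₃(‖x‖) + γ(‖w‖) for all x ∈ X₀ and w ∈ W. -/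
/-- Class-K function: continuous, strictly increasing on `[0,∞)`, zero at zero. -/
def ClassK (γ : ℝ → ℝ) : Prop :=
  ContinuousOn γ (Set.Ici 0) ∧ StrictMonoOn γ (Set.Ici 0) ∧ γ 0 = 0

/-- Class-K∞ function: class K and unbounded. -/
def ClassKInf (γ : ℝ → ℝ) : Prop :=
  ClassK γ ∧ Filter.Tendsto γ Filter.atTop Filter.atTop

/-! The disturbance enters additively, so Lipschitz continuity of `V` bounds its effect by
`L_V ‖w‖` once both `f_x(x)` and `f_x(x) + w` lie in the invariant set; adding this to the
undisturbed decrease gives the ISS dissipation inequality with the linear gain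
`γ(r) = (L_V + 1) r` (the `+ 1` keeps `γ` strictly increasing when `L_V = 0`). -/

theorem classK_const_mul {c : ℝ} (hc : 0 < c) : ClassK (fun r => c * r) :=
  ⟨(continuous_const.mul continuous_id).continuousOn,
    fun _ _ _ _ hab => mul_lt_mul_of_pos_left hab hc, mul_zero c⟩

theorem LipschitzOnWith.sub_le_add_mul_norm_of_add_disturbance {E : Type*}
    [SeminormedAddCommGroup E] {X W : Set E} {f : E → E} {V σ : E → ℝ} {L : NNReal}
    (hV : LipschitzOnWith L V X) (hinv : ∀ x ∈ X, ∀ w ∈ W, f x + w ∈ X) (hW0 : 0 ∈ W)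
    (hdec : ∀ x ∈ X, V (f x) - V x ≤ -σ x) :
    ∀ x ∈ X, ∀ w ∈ W, V (f x + w) - V x ≤ -σ x + L * ‖w‖ := by
  intro x hx w hw
  have hfx : f x ∈ X := by simpa using hinv x hx 0 hW0
  have hstep : V (f x + w) ≤ V (f x) + L * ‖w‖ := by
    simpa only [dist_self_add_left] using hV.le_add_mul (hinv x hx w hw) hfx
  linarith [hdec x hx]

theorem lipschitz_iss_lyapunov_general {n : ℕ}
    (X0 W : Set (EuclideanSpace ℝ (Fin n)))
    (hW0 : (0 : EuclideanSpace ℝ (Fin n)) ∈ W)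
    (fx : EuclideanSpace ℝ (Fin n) → EuclideanSpace ℝ (Fin n))
    -- robust positive invariance of X0 for x⁺ = f_x(x) + w:
    (hinv : ∀ x ∈ X0, ∀ w ∈ W, fx x + w ∈ X0)
    (V : EuclideanSpace ℝ (Fin n) → ℝ)
    (LV : NNReal) (hVLip : LipschitzOnWith LV V X0)
    (α₃ : ℝ → ℝ)
    (hdecrease : ∀ x ∈ X0, V (fx x) - V x ≤ -α₃ ‖x‖) :
    ∃ γ : ℝ → ℝ, ClassK γ ∧
      ∀ x ∈ X0, ∀ w ∈ W, V (fx x + w) - V x ≤ -α₃ ‖x‖ + γ ‖w‖ := by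
  refine ⟨fun r => ((LV : ℝ) + 1) * r, classK_const_mul (by positivity), ?_⟩
  intro x hx w hw
  calc V (fx x + w) - V x ≤ -α₃ ‖x‖ + LV * ‖w‖ :=
        hVLip.sub_le_add_mul_norm_of_add_disturbance hinv hW0 hdecrease x hx w hw
    _ ≤ -α₃ ‖x‖ + ((LV : ℝ) + 1) * ‖w‖ := by gcongr; linarith

/-- A Lipschitz ISS-Lyapunov function for the undisturbed system
`x⁺ = f_x(x)` is an ISS-Lyapunov function for `x⁺ = f_x(x) + w`. -/
theorem lipschitz_iss_lyapunov {n : ℕ}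
    (X0 W : Set (EuclideanSpace ℝ (Fin n)))
    (hX0c : IsCompact X0) (hX00 : 0 ∈ interior X0)
    (hWc : IsCompact W) (hW0 : (0 : EuclideanSpace ℝ (Fin n)) ∈ W)
    (fx : EuclideanSpace ℝ (Fin n) → EuclideanSpace ℝ (Fin n))
    (LF : NNReal) (hfLip : LipschitzOnWith LF fx X0)
    -- robust positive invariance of X0 for x⁺ = f_x(x) + w:
    (hinv : ∀ x ∈ X0, ∀ w ∈ W, fx x + w ∈ X0)
    (V : EuclideanSpace ℝ (Fin n) → ℝ) (hVnonneg : ∀ x ∈ X0, 0 ≤ V x)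
    (LV : NNReal) (hVLip : LipschitzOnWith LV V X0)
    (α₁ α₂ α₃ : ℝ → ℝ)
    (hα₁ : ClassKInf α₁) (hα₂ : ClassKInf α₂) (hα₃ : ClassKInf α₃)
    (hsandwich : ∀ x ∈ X0, α₁ ‖x‖ ≤ V x ∧ V x ≤ α₂ ‖x‖)
    (hdecrease : ∀ x ∈ X0, V (fx x) - V x ≤ -α₃ ‖x‖) :
    ∃ γ : ℝ → ℝ, ClassK γ ∧
      ∀ x ∈ X0, ∀ w ∈ W, V (fx x + w) - V x ≤ -α₃ ‖x‖ + γ ‖w‖ :=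
  lipschitz_iss_lyapunov_general X0 W hW0 fx hinv V LV hVLip α₃ hdecrease
end
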